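/- Let f : ℝ² → Mₙ(ℝ) be infinitely differentiable with f(x,y) invertible for every (x,y), and suppose g := f⁻¹ satisfies ∂_y g = −∂_x² g. Then φ := −(∂_x f)·f⁻¹ satisfies the first equation of the opposite noncommutative Burgers hierarchy, φ_y = −φ_xx − 2φ φ_x. -/

import Mathlib

attribute [local instance] Matrix.normedAddCommGroup Matrix.normedSpace

/-- Partial derivative in the `x`-direction of a function of two real variables. -/
noncomputable def pdx {E : Type*} [NormedAddCommGroup E] [NormedSpace ℝ E]
    (f : ℝ × ℝ → E) : ℝ × ℝ → E :=
  fun p => fderiv ℝ f p (1, 0)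

/-- Partial derivative in the `y`-direction of a function of two real variables. -/
noncomputable def pdy {E : Type*} [NormedAddCommGroup E] [NormedSpace ℝ E]
    (f : ℝ × ℝ → E) : ℝ × ℝ → E :=
  fun p => fderiv ℝ f p (0, 1)

/-!
Write `g = f⁻¹`. Differentiating `f g = 1` gives `φ = -f_x g = f g_x`, i.e. `g_x = g φ`
(a noncommutative Cole–Hopf substitution). Then `g_xx = g (φ² + φ_x)`, and `g_xxx` follows.
Computing the mixed derivative `g_xy = g_yx` once from `g_x = g φ` and once from
`g_y = -g_xx` yields `g (φ_y + φ_xx + 2 φ φ_x) = 0`, and `g` is invertible.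
-/

open scoped ContDiff

section MatrixCalculus

variable {E : Type*} [NormedAddCommGroup E] [NormedSpace ℝ E]

section Product

variable {l m n : Type*} [Fintype l] [Fintype m] [Fintype n]

noncomputable def Matrix.mulCLM : Matrix l m ℝ →L[ℝ] Matrix m n ℝ →L[ℝ] Matrix l n ℝ :=
  (mulLinearMap ℝ).toContinuousBilinearMap

theorem fderiv_matrix_mul_apply {A : E → Matrix l m ℝ} {B : E → Matrix m n ℝ} {x : E}
    (hA : DifferentiableAt ℝ A x) (hB : DifferentiableAt ℝ B x) (v : E) :
    fderiv ℝ (fun y => A y * B y) x v = fderiv ℝ A x v * B x + A x * fderiv ℝ B x v := by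
  have h := (Matrix.mulCLM.hasFDerivAt_of_bilinear hA.hasFDerivAt hB.hasFDerivAt).fderiv
  change fderiv ℝ (fun y => Matrix.mulCLM (A y) (B y)) x v = _
  -- `h` uses the product topology on matrices, defeq to but not syntactically the normed one
  erw [h]
  exact add_comm (A x * fderiv ℝ B x v) (fderiv ℝ A x v * B x)

theorem ContDiff.matrix_mul {k : WithTop ℕ∞} {A : E → Matrix l m ℝ} {B : E → Matrix m n ℝ}
    (hA : ContDiff ℝ k A) (hB : ContDiff ℝ k B) : ContDiff ℝ k (fun y => A y * B y) := by
  change ContDiff ℝ k (fun y => Matrix.mulCLM (A y) (B y))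
  exact (Matrix.mulCLM.contDiff.comp hA).clm_apply hB

end Product

variable {m : Type*} [Fintype m] [DecidableEq m]

/- The sup norm on matrices is not submultiplicative, so inversion is transported to the
complete normed ring of operators on `EuclideanSpace ℝ m`, where it is smooth. -/
theorem ContDiff.matrix_inv {k : WithTop ℕ∞} {A : E → Matrix m m ℝ}
    (hA : ContDiff ℝ k A) (hunit : ∀ x, IsUnit (A x)) : ContDiff ℝ k (fun x => (A x)⁻¹) := by
  let Φ := Matrix.toEuclideanCLM (n := m) (𝕜 := ℝ)
  let e := Φ.toAlgEquiv.toLinearEquiv.toContinuousLinearEquiv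
  have hu : ∀ x, IsUnit (e (A x)) := fun x => (hunit x).map Φ
  have he : ∀ x, (A x)⁻¹ = e.symm (Ring.inverse (e (A x))) := fun x => by
    rw [e.eq_symm_apply]
    have hdet := (Matrix.isUnit_iff_isUnit_det _).mp (hunit x)
    calc e (A x)⁻¹ = Ring.inverse (e (A x)) * (Φ (A x) * Φ (A x)⁻¹) :=
          (Ring.inverse_mul_cancel_left _ _ (hu x)).symm
      _ = Ring.inverse (e (A x)) := by
          rw [← map_mul, Matrix.mul_nonsing_inv _ hdet, map_one, mul_one]
  simp_rw [he]
  refine e.symm.contDiff.comp (contDiff_iff_contDiffAt.2 fun x => ?_)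
  exact (contDiffAt_ringInverse ℝ (hu x).unit).comp x (e.contDiff.comp hA).contDiffAt

theorem fderiv_matrix_inv_apply {A : E → Matrix m m ℝ} (hA : ContDiff ℝ 1 A)
    (hunit : ∀ x, IsUnit (A x)) (x v : E) :
    fderiv ℝ (fun y => (A y)⁻¹) x v = -((A x)⁻¹ * fderiv ℝ A x v * (A x)⁻¹) := by
  have hdet : ∀ y, IsUnit (A y).det := fun y => (Matrix.isUnit_iff_isUnit_det _).mp (hunit y)
  have hone : (fun y => A y * (A y)⁻¹) = fun _ => 1 :=
    funext fun y => Matrix.mul_nonsing_inv _ (hdet y)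
  have hprod : fderiv ℝ A x v * (A x)⁻¹ + A x * fderiv ℝ (fun y => (A y)⁻¹) x v = 0 := by
    rw [← fderiv_matrix_mul_apply (hA.differentiable one_ne_zero x)
      ((hA.matrix_inv hunit).differentiable one_ne_zero x), hone, fderiv_const_apply]
    rfl
  calc fderiv ℝ (fun y => (A y)⁻¹) x v
      = (A x)⁻¹ * (A x * fderiv ℝ (fun y => (A y)⁻¹) x v) := by
        rw [← mul_assoc, Matrix.nonsing_inv_mul _ (hdet x), one_mul]
    _ = -((A x)⁻¹ * fderiv ℝ A x v * (A x)⁻¹) := by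
        rw [eq_neg_of_add_eq_zero_right hprod, mul_neg, mul_assoc]

theorem fderiv_fun_fderiv_apply {F : Type*} [NormedAddCommGroup F] [NormedSpace ℝ F]
    {f : E → F} {x : E} (hf : DifferentiableAt ℝ (fderiv ℝ f) x) (v w : E) :
    fderiv ℝ (fun y => fderiv ℝ f y v) x w = fderiv ℝ (fderiv ℝ f) x w v := by
  simp [fderiv_clm_apply hf (differentiableAt_const v)]

end MatrixCalculus

section PartialDerivatives

variable {F : Type*} [NormedAddCommGroup F] [NormedSpace ℝ F]

theorem pdx_neg (A : ℝ × ℝ → F) (p : ℝ × ℝ) : pdx (fun q => -A q) p = -pdx A p := by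
  simp [pdx]

theorem pdx_add {A B : ℝ × ℝ → F} {p : ℝ × ℝ} (hA : DifferentiableAt ℝ A p)
    (hB : DifferentiableAt ℝ B p) : pdx (fun q => A q + B q) p = pdx A p + pdx B p := by
  simp [pdx, fderiv_fun_add hA hB]

theorem ContDiff.pdx {A : ℝ × ℝ → F} (hA : ContDiff ℝ ∞ A) : ContDiff ℝ ∞ (pdx A) :=
  (hA.fderiv_right le_rfl).clm_apply contDiff_const

theorem pdy_pdx_comm {A : ℝ × ℝ → F} (hA : ContDiff ℝ 2 A) (p : ℝ × ℝ) :
    pdy (pdx A) p = pdx (pdy A) p := by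
  have hd : DifferentiableAt ℝ (fderiv ℝ A) p :=
    (hA.fderiv_right (m := 1) le_rfl).differentiable one_ne_zero p
  change fderiv ℝ (fun q => fderiv ℝ A q (1, 0)) p (0, 1) =
    fderiv ℝ (fun q => fderiv ℝ A q (0, 1)) p (1, 0)
  rw [fderiv_fun_fderiv_apply hd, fderiv_fun_fderiv_apply hd]
  exact hA.contDiffAt.isSymmSndFDerivAt (by simp) _ _

variable {m : Type*} [Fintype m]

theorem pdx_mul {A B : ℝ × ℝ → Matrix m m ℝ} {p : ℝ × ℝ} (hA : DifferentiableAt ℝ A p)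
    (hB : DifferentiableAt ℝ B p) : pdx (fun q => A q * B q) p = pdx A p * B p + A p * pdx B p :=
  fderiv_matrix_mul_apply hA hB _

theorem pdy_mul {A B : ℝ × ℝ → Matrix m m ℝ} {p : ℝ × ℝ} (hA : DifferentiableAt ℝ A p)
    (hB : DifferentiableAt ℝ B p) : pdy (fun q => A q * B q) p = pdy A p * B p + A p * pdy B p :=
  fderiv_matrix_mul_apply hA hB _

variable [DecidableEq m]

theorem pdx_matrix_inv {A : ℝ × ℝ → Matrix m m ℝ} (hA : ContDiff ℝ 1 A)
    (hunit : ∀ p, IsUnit (A p)) (p : ℝ × ℝ) :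
    pdx (fun q => (A q)⁻¹) p = -((A p)⁻¹ * pdx A p * (A p)⁻¹) :=
  fderiv_matrix_inv_apply hA hunit p _

theorem opposite_burgers_of_pdx_eq_mul_of_backward_heat {g φ : ℝ × ℝ → Matrix m m ℝ}
    (hg : ContDiff ℝ ∞ g) (hφ : ContDiff ℝ ∞ φ) (hunit : ∀ p, IsUnit (g p))
    (hgx : ∀ p, pdx g p = g p * φ p) (hheat : ∀ p, pdy g p = -pdx (pdx g) p) (p : ℝ × ℝ) :
    pdy φ p = -pdx (pdx φ) p - 2 • (φ p * pdx φ p) := by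
  have hdiff : ∀ {A : ℝ × ℝ → Matrix m m ℝ}, ContDiff ℝ ∞ A → ∀ q, DifferentiableAt ℝ A q :=
    fun hA q => hA.differentiable (by simp) q
  have hgxx : ∀ q, pdx (pdx g) q = g q * (φ q * φ q + pdx φ q) := fun q => by
    rw [funext hgx, pdx_mul (hdiff hg q) (hdiff hφ q), hgx]
    noncomm_ring
  have hgxxx : pdx (pdx (pdx g)) p =
      g p * φ p * (φ p * φ p + pdx φ p) +
        g p * (pdx φ p * φ p + φ p * pdx φ p + pdx (pdx φ) p) := by
    rw [funext hgxx, pdx_mul (hdiff hg p) (hdiff ((hφ.matrix_mul hφ).add hφ.pdx) p), hgx,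
      pdx_add (hdiff (hφ.matrix_mul hφ) p) (hdiff hφ.pdx p), pdx_mul (hdiff hφ p) (hdiff hφ p)]
  have hmixed : pdy (pdx g) p = pdx (pdy g) p :=
    pdy_pdx_comm (hg.of_le (WithTop.coe_le_coe.2 le_top)) p
  rw [funext hgx, pdy_mul (hdiff hg p) (hdiff hφ p), hheat, funext hheat, pdx_neg, hgxx,
    hgxxx] at hmixed
  refine (hunit p).mul_left_cancel ?_
  linear_combination (norm := noncomm_ring) hmixed

end PartialDerivatives

/-- If `g = f⁻¹` satisfies the backward heat equation `g_y = -g_xx`, then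
`φ = -f_x f⁻¹` satisfies the first equation of the opposite noncommutative
Burgers hierarchy, `φ_y = -φ_xx - 2 φ φ_x`. -/
theorem opposite_burgers_of_backward_heat (n : ℕ)
    (f : ℝ × ℝ → Matrix (Fin n) (Fin n) ℝ)
    (hf : ContDiff ℝ (⊤ : ℕ∞) f)
    (hinv : ∀ p, IsUnit (f p))
    (hheat : ∀ p, pdy (fun q => (f q)⁻¹) p = - pdx (pdx (fun q => (f q)⁻¹)) p)
    (φ : ℝ × ℝ → Matrix (Fin n) (Fin n) ℝ)
    (hφ : ∀ p, φ p = - (pdx f p * (f p)⁻¹)) :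
    ∀ p, pdy φ p = - pdx (pdx φ) p - 2 • (φ p * pdx φ p) := by
  have hg : ContDiff ℝ ∞ (fun q => (f q)⁻¹) := hf.matrix_inv hinv
  have hφ_smooth : ContDiff ℝ ∞ φ := by
    rw [funext hφ]
    exact (hf.pdx.matrix_mul hg).neg
  have hgx : ∀ p, pdx (fun q => (f q)⁻¹) p = (f p)⁻¹ * φ p := fun p => by
    rw [pdx_matrix_inv (hf.of_le (WithTop.coe_le_coe.2 le_top)) hinv, hφ]
    noncomm_ring
  exact opposite_burgers_of_pdx_eq_mul_of_backward_heat hg hφ_smooth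
    (fun p => Matrix.isUnit_nonsing_inv_iff.2 (hinv p)) hgx hheat
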